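/- arXiv:0903.0142 — 4 statements merged into one kernel-verified Lean document; each statement's English description precedes it below -/
import Mathlib

section
/- Let (p, p') be a pair of real numbers, not both zero. If θ₁, θ₂ ∈ (0, π) both satisfy p'·(1 − 3cos²θ) − √6·p·cosθ = 0 together with p'·cosθ ≥ 0, then θ₁ = θ₂. -/
open Real

/-
Writing c = cos θ, the equation is the quadratic p'(1 - 3c²) - √6 p c = 0. If p' = 0 its only root
is c = 0. Otherwise it has two roots with product -1/3, so they have opposite signs and at most one
satisfies p' c ≥ 0. Since cos is injective on (0, π), the root c determines θ.
-/

lemma mul_roots_eq_neg_one_third {a b c₁ c₂ : ℝ} (hb : b ≠ 0) (hne : c₁ ≠ c₂)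
    (h₁ : b * (1 - 3 * c₁ ^ 2) - a * c₁ = 0) (h₂ : b * (1 - 3 * c₂ ^ 2) - a * c₂ = 0) :
    3 * (c₁ * c₂) = -1 := by
  have hsum : 3 * b * (c₁ + c₂) + a = 0 := by
    have : (c₁ - c₂) * (3 * b * (c₁ + c₂) + a) = 0 := by linear_combination h₂ - h₁
    exact (mul_eq_zero.mp this).resolve_left (sub_ne_zero.mpr hne)
  have : b * (1 + 3 * (c₁ * c₂)) = 0 := by linear_combination h₁ + c₁ * hsum
  linarith [(mul_eq_zero.mp this).resolve_left hb]

lemma eq_of_roots_of_mul_nonneg {a b c₁ c₂ : ℝ} (hab : (a, b) ≠ (0, 0))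
    (h₁ : b * (1 - 3 * c₁ ^ 2) - a * c₁ = 0) (hs₁ : 0 ≤ b * c₁)
    (h₂ : b * (1 - 3 * c₂ ^ 2) - a * c₂ = 0) (hs₂ : 0 ≤ b * c₂) :
    c₁ = c₂ := by
  rcases eq_or_ne b 0 with rfl | hb
  · have ha : a ≠ 0 := fun ha => hab (by rw [ha])
    have hc₁ : c₁ = 0 := (mul_eq_zero.mp (by linarith : a * c₁ = 0)).resolve_left ha
    have hc₂ : c₂ = 0 := (mul_eq_zero.mp (by linarith : a * c₂ = 0)).resolve_left ha
    rw [hc₁, hc₂]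
  · by_contra hne
    have hprod := mul_roots_eq_neg_one_third hb hne h₁ h₂
    nlinarith [mul_nonneg hs₁ hs₂, sq_pos_of_ne_zero hb]

theorem stmt_1 (p p' : ℝ) (h : (p, p') ≠ (0, 0)) (θ₁ θ₂ : ℝ)
    (hθ₁ : θ₁ ∈ Set.Ioo (0 : ℝ) π) (hθ₂ : θ₂ ∈ Set.Ioo (0 : ℝ) π)
    (he₁ : p' * (1 - 3 * cos θ₁ ^ 2) - Real.sqrt 6 * p * cos θ₁ = 0)
    (hs₁ : p' * cos θ₁ ≥ 0)
    (he₂ : p' * (1 - 3 * cos θ₂ ^ 2) - Real.sqrt 6 * p * cos θ₂ = 0)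
    (hs₂ : p' * cos θ₂ ≥ 0) :
    θ₁ = θ₂ := by
  have hcoeff : (Real.sqrt 6 * p, p') ≠ (0, 0) := by
    intro h0
    obtain ⟨h6p, hp'⟩ := Prod.mk.inj h0
    have hp : p = 0 := (mul_eq_zero.mp h6p).resolve_left (by positivity)
    exact h (by rw [hp, hp'])
  exact injOn_cos (Set.Ioo_subset_Icc_self hθ₁) (Set.Ioo_subset_Icc_self hθ₂)
    (eq_of_roots_of_mul_nonneg hcoeff he₁ hs₁ he₂ hs₂)
end

section
/- Let (p, p') and (q, q') be pairs of real numbers with p' > 0 and q' > 0. Suppose θ_P ∈ (0, π) satisfies p'(1 − 3cos²θ_P) = √6·p·cosθ_P and p'·cosθ_P ≥ 0, and θ_Q ∈ (0, π) satisfies the analogous conditions for (q, q'). Then θ_Q < θ_P if and only if q'·p − q·p' > 0. -/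
/-!
Cross-multiplying the two defining relations gives
`√6 · cos θP · cos θQ · (q'p − qp') = p'q' (cos θQ − cos θP)(1 + 3 cos θP cos θQ)`,
which is the strict decrease of `x ↦ (1 − 3x²)/(√6 x)` on `(0, 1]` in polynomial form.
Both cosines are positive, so `q'p − qp'` has the sign of `cos θQ − cos θP`, and `cos`
is strictly decreasing on `[0, π]`.
-/

open Real

lemma pos_of_mul_one_sub_three_sq_eq {a b k c : ℝ} (ha : 0 < a)
    (h : a * (1 - 3 * c ^ 2) = k * b * c) (hc : 0 ≤ a * c) : 0 < c := by
  refine (nonneg_of_mul_nonneg_right hc ha).lt_of_ne' fun hc0 => ?_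
  subst hc0
  linarith

lemma mul_cross_sub_eq_of_mul_one_sub_three_sq_eq {a a' b b' k x y : ℝ}
    (hx : a' * (1 - 3 * x ^ 2) = k * a * x) (hy : b' * (1 - 3 * y ^ 2) = k * b * y) :
    k * x * y * (b' * a - b * a') = a' * b' * (y - x) * (1 + 3 * x * y) := by
  linear_combination x * a' * hy - y * b' * hx

lemma cross_sub_pos_iff_of_mul_one_sub_three_sq_eq {a a' b b' k x y : ℝ}
    (ha' : 0 < a') (hb' : 0 < b') (hk : 0 < k) (hx0 : 0 < x) (hy0 : 0 < y)
    (hx : a' * (1 - 3 * x ^ 2) = k * a * x) (hy : b' * (1 - 3 * y ^ 2) = k * b * y) :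
    0 < b' * a - b * a' ↔ x < y := by
  have hkxy : 0 < k * x * y := by positivity
  have hxy : 0 < 1 + 3 * x * y := by positivity
  rw [← mul_pos_iff_of_pos_left hkxy, mul_cross_sub_eq_of_mul_one_sub_three_sq_eq hx hy,
    mul_pos_iff_of_pos_right hxy, mul_pos_iff_of_pos_left (mul_pos ha' hb'), sub_pos]

theorem stmt_5 (p p' q q' θP θQ : ℝ) (hp' : 0 < p') (hq' : 0 < q')
    (hθP : θP ∈ Set.Ioo (0 : ℝ) π)
    (heP : p' * (1 - 3 * cos θP ^ 2) = Real.sqrt 6 * p * cos θP)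
    (hsP : p' * cos θP ≥ 0)
    (hθQ : θQ ∈ Set.Ioo (0 : ℝ) π)
    (heQ : q' * (1 - 3 * cos θQ ^ 2) = Real.sqrt 6 * q * cos θQ)
    (hsQ : q' * cos θQ ≥ 0) :
    θQ < θP ↔ q' * p - q * p' > 0 := by
  have hcP := pos_of_mul_one_sub_three_sq_eq hp' heP hsP
  have hcQ := pos_of_mul_one_sub_three_sq_eq hq' heQ hsQ
  rw [gt_iff_lt, cross_sub_pos_iff_of_mul_one_sub_three_sq_eq hp' hq'
    (Real.sqrt_pos.mpr (by norm_num)) hcP hcQ heP heQ]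
  exact (strictAntiOn_cos.lt_iff_gt (Set.Ioo_subset_Icc_self hθP)
    (Set.Ioo_subset_Icc_self hθQ)).symm
end

section
/- Let (q, q') be a pair of real numbers with (q, q') ≠ (0, 0) and let θ ∈ (0, π). If (1 − 3cos²θ)·q' − √6·q·cosθ = 0, then q + √6·q'·cosθ ≠ 0. In other words, every zero of α_Q in the open interval (0, π) is a simple (nondegenerate) zero. -/
/-! The conditions `α_Q = 0` and `α_Q' = 0` form a linear system in `(q, q')` whose determinant
`-(1 + 3 cos² θ)` never vanishes, so only `Q = 0` satisfies both. -/

open Real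

lemma eq_zero_of_alpha_eq_zero_of_deriv_eq_zero {c q q' : ℝ}
    (he : (1 - 3 * c ^ 2) * q' - √6 * q * c = 0) (hd : q + √6 * q' * c = 0) :
    q = 0 ∧ q' = 0 := by
  have h6 : √6 * √6 = 6 := mul_self_sqrt (by norm_num)
  have hdet : (1 + 3 * c ^ 2) * q' = 0 := by
    linear_combination he + √6 * c * hd - q' * c ^ 2 * h6
  have hq' : q' = 0 := (mul_eq_zero.1 hdet).resolve_left (by positivity)
  exact ⟨by simpa [hq'] using hd, hq'⟩

theorem stmt_9_general (q q' : ℝ) (h : (q, q') ≠ (0, 0)) (θ : ℝ)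
    (he : (1 - 3 * cos θ ^ 2) * q' - Real.sqrt 6 * q * cos θ = 0) :
    q + Real.sqrt 6 * q' * cos θ ≠ 0 := by
  intro hd
  obtain ⟨rfl, rfl⟩ := eq_zero_of_alpha_eq_zero_of_deriv_eq_zero he hd
  exact h rfl

theorem stmt_9 (q q' : ℝ) (h : (q, q') ≠ (0, 0)) (θ : ℝ)
    (hθ : θ ∈ Set.Ioo (0 : ℝ) π)
    (he : (1 - 3 * cos θ ^ 2) * q' - Real.sqrt 6 * q * cos θ = 0) :
    q + Real.sqrt 6 * q' * cos θ ≠ 0 :=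
  stmt_9_general q q' h θ he
end

section
/- Let θ₀ < θ₁ be angles in [0, π] and Q = (q, q') a pair of integers with α_Q(σ) > 0 for all σ ∈ (θ₀, θ₁), where α_Q(σ) = (1 − 3cos²σ)·q' − √6·cosσ·q. Let a⁰, w⁰, v⁰ be smooth real-valued functions of σ ∈ [θ₀, θ₁] and let ε be a strictly positive function of σ with ε(σ)·α_Q(σ) < 1/2 for all σ. Define a(σ, v) = a⁰(σ) + ε(σ)·cos(v + v⁰(σ)) and w(σ, v) = w⁰(σ) − ε(σ)·sin(v + v⁰(σ)) on (θ₀, θ₁) × ℝ/2πℤ. Then the map Φ(σ, v) = (s = a(σ, v), t = q·v + (1 − 3cos²σ)·w(σ, v) mod 2π, θ = σ, φ = q'·v + √6·cosσ·w(σ, v) mod 2π) from (θ₀, θ₁) × ℝ/2πℤ into ℝ × (ℝ/2πℤ) × [0, π] × (ℝ/2πℤ) is injective. -/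
open Real

theorem stmt_18 (θ₀ θ₁ : ℝ) (hθ₀ : 0 ≤ θ₀) (hθ₁ : θ₁ ≤ π) (hlt : θ₀ < θ₁)
    (q q' : ℤ)
    (hα : ∀ σ ∈ Set.Ioo θ₀ θ₁,
      0 < (1 - 3 * cos σ ^ 2) * (q' : ℝ) - Real.sqrt 6 * cos σ * (q : ℝ))
    (a0 w0 v0 ε : ℝ → ℝ)
    (ha0 : ContDiffOn ℝ (⊤ : ℕ∞) a0 (Set.Icc θ₀ θ₁))
    (hw0 : ContDiffOn ℝ (⊤ : ℕ∞) w0 (Set.Icc θ₀ θ₁))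
    (hv0 : ContDiffOn ℝ (⊤ : ℕ∞) v0 (Set.Icc θ₀ θ₁))
    (hε : ∀ σ ∈ Set.Icc θ₀ θ₁, 0 < ε σ)
    (hεα : ∀ σ ∈ Set.Icc θ₀ θ₁,
      ε σ * ((1 - 3 * cos σ ^ 2) * (q' : ℝ) - Real.sqrt 6 * cos σ * (q : ℝ)) < 1 / 2)
    (a w : ℝ → ℝ → ℝ)
    (hadef : ∀ σ v, a σ v = a0 σ + ε σ * cos (v + v0 σ))
    (hwdef : ∀ σ v, w σ v = w0 σ - ε σ * sin (v + v0 σ))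
    (Φ : ℝ × ℝ → ℝ × AddCircle (2 * π) × ℝ × AddCircle (2 * π))
    (hΦ : ∀ σ v, Φ (σ, v) =
      (a σ v,
        (((q : ℝ) * v + (1 - 3 * cos σ ^ 2) * w σ v : ℝ) : AddCircle (2 * π)),
        σ,
        (((q' : ℝ) * v + Real.sqrt 6 * cos σ * w σ v : ℝ) : AddCircle (2 * π)))) :
    ∀ σ v σ' v', σ ∈ Set.Ioo θ₀ θ₁ → σ' ∈ Set.Ioo θ₀ θ₁ →
      Φ (σ, v) = Φ (σ', v') →
      σ = σ' ∧ ((v : ℝ) : AddCircle (2 * π)) = ((v' : ℝ) : AddCircle (2 * π)) := by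
  intro σ v σ' v' hσ hσ' heq
  have hσI : σ ∈ Set.Icc θ₀ θ₁ := Set.Ioo_subset_Icc_self hσ
  rw [hΦ, hΦ] at heq
  simp only [Prod.mk.injEq] at heq
  obtain ⟨h1, h2, h3, h4⟩ := heq
  subst h3
  refine ⟨rfl, ?_⟩
  set A : ℝ := 1 - 3 * cos σ ^ 2 with hA
  set B : ℝ := Real.sqrt 6 * cos σ with hB
  set α : ℝ := A * (q' : ℝ) - B * (q : ℝ) with hα'
  have hαpos : 0 < α := hα σ hσ
  have hεpos : 0 < ε σ := hε σ hσI
  have hεα' : ε σ * α < 1 / 2 := hεα σ hσI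
  set X := v + v0 σ with hX
  set Y := v' + v0 σ with hY
  -- cos equality from first component
  have hcos : cos X = cos Y := by
    rw [hadef, hadef] at h1
    exact mul_left_cancel₀ (ne_of_gt hεpos) (add_left_cancel h1)
  -- extract integer relations from AddCircle equalities
  have h2' : ∃ k : ℤ, (k : ℝ) * (2 * π) =
      ((q : ℝ) * v + A * w σ v) - ((q : ℝ) * v' + A * w σ v') := by
    have := sub_eq_zero.mpr h2
    rw [← AddCircle.coe_sub, AddCircle.coe_eq_zero_iff] at this
    obtain ⟨n, hn⟩ := this
    exact ⟨n, by rw [← hn, zsmul_eq_mul]⟩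
  have h4' : ∃ m : ℤ, (m : ℝ) * (2 * π) =
      ((q' : ℝ) * v + B * w σ v) - ((q' : ℝ) * v' + B * w σ v') := by
    have := sub_eq_zero.mpr h4
    rw [← AddCircle.coe_sub, AddCircle.coe_eq_zero_iff] at this
    obtain ⟨n, hn⟩ := this
    exact ⟨n, by rw [← hn, zsmul_eq_mul]⟩
  obtain ⟨k, hk⟩ := h2'
  obtain ⟨m, hm⟩ := h4' 
  -- combine: α * (w σ v - w σ v') = (q' * k - q * m) * (2π)
  set n : ℤ := q' * k - q * m with hn
  have hcomb : α * (w σ v - w σ v') = (n : ℝ) * (2 * π) := by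
    have e1 : (q' : ℝ) * ((k : ℝ) * (2 * π)) - (q : ℝ) * ((m : ℝ) * (2 * π)) =
        α * (w σ v - w σ v') := by
      rw [hk, hm]; ring
    rw [← e1, hn]; push_cast; ring
  -- bound |w σ v - w σ v'| ≤ 2 ε σ
  have hwbd : |w σ v - w σ v'| ≤ 2 * ε σ := by
    rw [hwdef, hwdef]
    have : w0 σ - ε σ * sin X - (w0 σ - ε σ * sin Y) = ε σ * (sin Y - sin X) := by ring
    rw [this, abs_mul, abs_of_pos hεpos]
    have h1 : |sin Y - sin X| ≤ 2 := by
      have := abs_sub (sin Y) (sin X)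
      have hs1 := abs_sin_le_one Y
      have hs2 := abs_sin_le_one X
      calc |sin Y - sin X| ≤ |sin Y| + |sin X| := abs_sub _ _
        _ ≤ 2 := by linarith
    nlinarith
  have hπ : 0 < π := Real.pi_pos
  have hbound : |(n : ℝ) * (2 * π)| < 2 * π := by
    rw [← hcomb, abs_mul, abs_of_pos hαpos]
    have : α * |w σ v - w σ v'| ≤ α * (2 * ε σ) :=
      mul_le_mul_of_nonneg_left hwbd (le_of_lt hαpos)
    have h2 : α * (2 * ε σ) < 1 := by nlinarith
    linarith [Real.pi_gt_three]
  have hn0 : n = 0 := by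
    by_contra h
    have : (1 : ℝ) ≤ |(n : ℝ)| := by
      rw [← Int.cast_abs]
      exact_mod_cast Int.one_le_abs (by exact_mod_cast h)
    rw [abs_mul, abs_of_pos (by linarith : (0:ℝ) < 2 * π)] at hbound
    have h2π : (0:ℝ) < 2 * π := by linarith
    have := mul_le_mul_of_nonneg_right this (le_of_lt h2π)
    linarith
  rw [hn0, Int.cast_zero, zero_mul] at hcomb
  have hweq : w σ v = w σ v' := by
    have := (mul_eq_zero.mp hcomb).resolve_left (ne_of_gt hαpos)
    linarith
  have hsin : sin X = sin Y := by
    rw [hwdef, hwdef] at hweq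
    have := mul_left_cancel₀ (ne_of_gt hεpos) (by linarith : ε σ * sin X = ε σ * sin Y)
    exact this
  -- cos (X - Y) = 1
  have hc1 : cos (X - Y) = 1 := by
    rw [Real.cos_sub, hcos, hsin]
    linear_combination Real.sin_sq_add_cos_sq Y
  obtain ⟨N, hN⟩ := (Real.cos_eq_one_iff _).mp hc1
  have hvv : v - v' = (N : ℝ) * (2 * π) := by
    have : X - Y = v - v' := by rw [hX, hY]; ring
    linarith [hN, this]
  rw [← sub_eq_zero, ← AddCircle.coe_sub, AddCircle.coe_eq_zero_iff]
  exact ⟨N, by rw [zsmul_eq_mul, hvv]⟩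
end
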